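/- arXiv:2309.07246 — 2 statements merged into one kernel-verified Lean document; each statement's English description precedes it below -/
import Mathlib

section
/- Let c, d be positive integers, I = ℕ^d × [c], I_n = [n]^d × [c], and let (M_n)_{n≥1} be a Sym-invariant chain of nonnegative monoids, i.e. M_n is a submonoid of ℤ_{≥0}^(I_n), M_m ⊆ M_n for m ≤ n, and each M_n is Sym(n)-invariant. Set M = ∪_{n≥1} M_n. The following are equivalent: (i) the chain stabilizes (there is p ∈ ℕ such that for all n ≥ m ≥ p, M_n equals the submonoid generated by Sym(n)(M_m)) and M_n is a finitely generated monoid for all sufficiently large n; (ii) there exist p ∈ ℕ and a finite subset H_p ⊆ M_p such that for every n ≥ p, Sym(n)(H_p) is the Hilbert basis of M_n; (iii) there exist q, q' ∈ ℕ such that for all n ≥ q: (a) M_n = M ∩ ℤ^(I_n), and (b) M_n has a finite Hilbert basis whose elements have support size at most q'; (iv) M has a finite equivariant Hilbert basis, i.e. a finite H ⊆ M such that Sym(H) is the Hilbert basis of M. -/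
open Finsupp

/-- A permutation of `ℕ` that moves only finitely many points:
an element of the infinite symmetric group `Sym`. -/
def IsFinPerm (σ : Equiv.Perm ℕ) : Prop := {i | σ i ≠ i}.Finite

/-- Membership in `Sym(n)`: permutations of `ℕ` fixing every index `≥ n`
(the indices `0, 1, …, n-1` play the role of `[n] = {1, …, n}`). -/
def InSymN (n : ℕ) (σ : Equiv.Perm ℕ) : Prop := ∀ i, n ≤ i → σ i = i

/-- `u ∈ ℤ_{≥0}^{(I)}`. -/
def FsNonneg {I : Type*} (u : I →₀ ℤ) : Prop := ∀ i, 0 ≤ u i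

/-- The partial order `⊑`. -/
def Sqle {I : Type*} (u v : I →₀ ℤ) : Prop := ∀ i, 0 ≤ u i * v i ∧ |u i| ≤ |v i|

/-- The Graver basis of (the underlying set of) a lattice `L`:
the `⊑`-minimal elements of `L \ {0}`. -/
def GraverBasis {I : Type*} (L : Set (I →₀ ℤ)) : Set (I →₀ ℤ) :=
  {u | u ∈ L ∧ u ≠ 0 ∧ ∀ v ∈ L, v ≠ 0 → Sqle v u → v = u}

/-- The `L`-fiber of `u`. -/
def latFiber {I : Type*} (L : Set (I →₀ ℤ)) (u : I →₀ ℤ) : Set (I →₀ ℤ) :=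
  {v | FsNonneg v ∧ u - v ∈ L}

/-- `B` is a Markov basis of `L`: for each nonnegative `u` the graph on the fiber
`F_L(u)` with edges `v ~ w` whenever `v - w ∈ B ∪ (-B)` is connected. -/
def IsMarkovBasis {I : Type*} (L B : Set (I →₀ ℤ)) : Prop :=
  ∀ u, FsNonneg u → ∀ v ∈ latFiber L u, ∀ w ∈ latFiber L u,
    Relation.ReflTransGen
      (fun x y => x ∈ latFiber L u ∧ y ∈ latFiber L u ∧ (x - y ∈ B ∨ y - x ∈ B)) v w

/-- A term order on `ℤ_{≥0}^{(I)}`: an additive well-order on the nonnegative elements. -/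
structure TermOrderZ (I : Type*) where
  lt : (I →₀ ℤ) → (I →₀ ℤ) → Prop
  irrefl : ∀ u, FsNonneg u → ¬ lt u u
  trans : ∀ u v w, FsNonneg u → FsNonneg v → FsNonneg w → lt u v → lt v w → lt u w
  total : ∀ u v, FsNonneg u → FsNonneg v → u ≠ v → lt u v ∨ lt v u
  min_exists : ∀ S : Set (I →₀ ℤ), (∀ u ∈ S, FsNonneg u) → S.Nonempty →
    ∃ m ∈ S, ∀ u ∈ S, u ≠ m → ¬ lt u m
  add_right : ∀ u v w, FsNonneg u → FsNonneg v → FsNonneg w → lt u v → lt (u + w) (v + w)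

/-- There is a directed path (w.r.t. `lt`, with moves from `B ∪ (-B)`) inside the fiber
of `u` from `u` to the `lt`-minimal element of the fiber. -/
def GroebnerPath {I : Type*} (L : Set (I →₀ ℤ)) (lt : (I →₀ ℤ) → (I →₀ ℤ) → Prop)
    (B : Set (I →₀ ℤ)) (u : I →₀ ℤ) : Prop :=
  ∃ (s : ℕ) (v : ℕ → (I →₀ ℤ)), v 0 = u ∧ (∀ t ≤ s, v t ∈ latFiber L u) ∧
    (∀ t < s, lt (v (t + 1)) (v t) ∧ (v t - v (t + 1) ∈ B ∨ v (t + 1) - v t ∈ B)) ∧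
    (∀ w ∈ latFiber L u, w ≠ v s → lt (v s) w)

/-- `B` is a Gröbner basis of `L` with respect to the term order `lt`. -/
def IsGroebnerBasis {I : Type*} (L : Set (I →₀ ℤ))
    (lt : (I →₀ ℤ) → (I →₀ ℤ) → Prop) (B : Set (I →₀ ℤ)) : Prop :=
  ∀ u, FsNonneg u → GroebnerPath L lt B u

/-- `H` is a Hilbert basis of the (set underlying a) monoid `M`:
a generating set of `M` contained in every generating set of `M`. -/
def IsHilbertBasis {N : Type*} [AddCommMonoid N] (M H : Set N) : Prop :=
  H ⊆ M ∧ (AddSubmonoid.closure H : Set N) = M ∧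
    ∀ A ⊆ M, (AddSubmonoid.closure A : Set N) = M → H ⊆ A

/-- `u` is an irreducible element of `M`. -/
def IsIrredElem {N : Type*} [AddCommMonoid N] (M : Set N) (u : N) : Prop :=
  u ∈ M ∧ u ≠ 0 ∧ ∀ v ∈ M, ∀ w ∈ M, u = v + w → v = 0 ∨ w = 0

/-- The action of a permutation of `ℕ` on `ℤ^{(ℕ^d × [c])}`:
`(σ·u)((σ i₁, …, σ i_d), j) = u((i₁, …, i_d), j)`. -/
noncomputable def permActd (d c : ℕ) (σ : Equiv.Perm ℕ) (u : (Fin d → ℕ) × Fin c →₀ ℤ) :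
    (Fin d → ℕ) × Fin c →₀ ℤ :=
  Finsupp.equivMapDomain
    (Equiv.prodCongr ((Equiv.refl (Fin d)).arrowCongr σ) (Equiv.refl (Fin c))) u

/-- The action of a permutation of `ℕ` on `ℤ^{(ℕ × [c])}`: `(σ·u)(σ i, j) = u(i, j)`. -/
noncomputable def permAct1 (c : ℕ) (σ : Equiv.Perm ℕ) (u : ℕ × Fin c →₀ ℤ) :
    ℕ × Fin c →₀ ℤ :=
  Finsupp.equivMapDomain (Equiv.prodCongr σ (Equiv.refl (Fin c))) u

/-- The action of a permutation of `ℕ` on `ℤ^{(ℕ)}`: `(σ·u)(σ i) = u i`. -/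
noncomputable def permAct0 (σ : Equiv.Perm ℕ) (u : ℕ →₀ ℤ) : ℕ →₀ ℤ :=
  Finsupp.equivMapDomain σ u

/-- `Sym(B)` for `B ⊆ ℤ^{(ℕ^d × [c])}`. -/
def symOrbitd (d c : ℕ) (B : Set ((Fin d → ℕ) × Fin c →₀ ℤ)) :
    Set ((Fin d → ℕ) × Fin c →₀ ℤ) :=
  {w | ∃ σ, IsFinPerm σ ∧ ∃ b ∈ B, w = permActd d c σ b}

/-- `Sym(n)(B)` for `B ⊆ ℤ^{(ℕ^d × [c])}`. -/
def symOrbitNd (d c n : ℕ) (B : Set ((Fin d → ℕ) × Fin c →₀ ℤ)) :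
    Set ((Fin d → ℕ) × Fin c →₀ ℤ) :=
  {w | ∃ σ, InSymN n σ ∧ ∃ b ∈ B, w = permActd d c σ b}

/-- `Sym(B)` for `B ⊆ ℤ^{(ℕ × [c])}`. -/
def symOrbit1 (c : ℕ) (B : Set (ℕ × Fin c →₀ ℤ)) : Set (ℕ × Fin c →₀ ℤ) :=
  {w | ∃ σ, IsFinPerm σ ∧ ∃ b ∈ B, w = permAct1 c σ b}

/-- `Sym(B)` for `B ⊆ ℤ^{(ℕ)}`. -/
def symOrbit0 (B : Set (ℕ →₀ ℤ)) : Set (ℕ →₀ ℤ) :=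
  {w | ∃ σ, IsFinPerm σ ∧ ∃ b ∈ B, w = permAct0 σ b}

/-- `supp(u) ⊆ I_n = [n]^d × [c]`. -/
def SuppIn (d c n : ℕ) (u : (Fin d → ℕ) × Fin c →₀ ℤ) : Prop :=
  ∀ p : (Fin d → ℕ) × Fin c, u p ≠ 0 → ∀ k, p.1 k < n

/-- `ℤ^{(I_n)}`, for `I_n = [n]^d × [c]`, as a subgroup of `ℤ^{(ℕ^d × [c])}`. -/
noncomputable def suppSubgroup (d c n : ℕ) : AddSubgroup ((Fin d → ℕ) × Fin c →₀ ℤ) where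
  carrier := {u | SuppIn d c n u}
  zero_mem' := by intro p hp; simp at hp
  add_mem' := by
    intro a b ha hb p hp k
    by_cases h : a p = 0
    · refine hb p ?_ k
      intro hbp
      exact hp (by simp [h, hbp])
    · exact ha p h k
  neg_mem' := by
    intro a ha p hp k
    refine ha p ?_ k
    intro hap
    exact hp (by simp [hap])

/-- The positive part `u⁺`. -/
noncomputable def fsPos {I : Type*} (u : I →₀ ℤ) : I →₀ ℤ :=
  u.mapRange (fun z => max z 0) (by simp)

/-- The negative part `u⁻`. -/
noncomputable def fsNeg {I : Type*} (u : I →₀ ℤ) : I →₀ ℤ :=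
  u.mapRange (fun z => max (-z) 0) (by simp)

namespace MCSAux

open Finsupp AddSubmonoid

/-! ### Degree and irreducibles -/

noncomputable def degZ {I : Type*} (u : I →₀ ℤ) : ℕ := (u.sum fun _ z => z).toNat

def IrrSet {N : Type*} [AddCommMonoid N] (M : Set N) : Set N := {u | IsIrredElem M u}

lemma degZ_add {I : Type*} {u v : I →₀ ℤ} (hu : FsNonneg u) (hv : FsNonneg v) :
    degZ (u + v) = degZ u + degZ v := by
  have hsum : (u + v).sum (fun _ z => z) = u.sum (fun _ z => z) + v.sum (fun _ z => z) :=
    Finsupp.sum_add_index' (fun _ => rfl) (fun _ _ _ => rfl)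
  have h1 : 0 ≤ u.sum fun _ z => z := Finset.sum_nonneg fun i _ => hu i
  have h2 : 0 ≤ v.sum fun _ z => z := Finset.sum_nonneg fun i _ => hv i
  simp only [degZ, hsum]
  omega

lemma degZ_pos {I : Type*} {u : I →₀ ℤ} (hu : FsNonneg u) (h0 : u ≠ 0) : 1 ≤ degZ u := by
  have : ∃ i, u i ≠ 0 := by
    by_contra h
    push_neg at h
    exact h0 (Finsupp.ext fun i => h i)
  obtain ⟨i, hi⟩ := this
  have hmem : i ∈ u.support := Finsupp.mem_support_iff.mpr hi
  have h1 : u i ≤ u.sum fun _ z => z :=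
    Finset.single_le_sum (f := fun j => u j) (fun j _ => hu j) hmem
  have h2 : 1 ≤ u i := lt_of_le_of_ne (hu i) (Ne.symm hi)
  simp only [degZ]
  omega

lemma mem_closure_irred {I : Type*} (M : AddSubmonoid (I →₀ ℤ))
    (hnn : ∀ u ∈ M, FsNonneg u) :
    ∀ u ∈ M, u ∈ AddSubmonoid.closure (IrrSet (M : Set (I →₀ ℤ))) := by
  suffices H : ∀ k, ∀ u ∈ M, degZ u ≤ k →
      u ∈ AddSubmonoid.closure (IrrSet (M : Set (I →₀ ℤ))) by
    exact fun u hu => H (degZ u) u hu le_rfl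
  intro k
  induction k with
  | zero =>
    intro u hu hk
    have h0 : u = 0 := by
      by_contra h0
      have := degZ_pos (hnn u hu) h0
      omega
    exact h0 ▸ zero_mem _
  | succ k IH =>
    intro u hu hk
    by_cases h0 : u = 0
    · exact h0 ▸ zero_mem _
    by_cases hirr : IsIrredElem (M : Set (I →₀ ℤ)) u
    · exact AddSubmonoid.subset_closure hirr
    · have hdec : ∃ v ∈ M, ∃ w ∈ M, u = v + w ∧ v ≠ 0 ∧ w ≠ 0 := by
        by_contra hc
        push_neg at hc
        refine hirr ⟨hu, h0, ?_⟩
        intro v hv w hw huvw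
        by_contra hvw
        push_neg at hvw
        exact hvw.2 (hc v hv w hw huvw hvw.1)
      obtain ⟨v, hv, w, hw, rfl, hv0, hw0⟩ := hdec
      have hd := degZ_add (hnn v hv) (hnn w hw)
      have h1 := degZ_pos (hnn v hv) hv0
      have h2 := degZ_pos (hnn w hw) hw0
      exact add_mem (IH v hv (by omega)) (IH w hw (by omega))

lemma irred_mem_of_closure_eq {I : Type*} (M : AddSubmonoid (I →₀ ℤ)) {A : Set (I →₀ ℤ)}
    (hA : (AddSubmonoid.closure A : Set (I →₀ ℤ)) = ↑M) {u : I →₀ ℤ}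
    (hu : IsIrredElem (M : Set (I →₀ ℤ)) u) : u ∈ A := by
  have hu' : u ∈ AddSubmonoid.closure A := by
    rw [← SetLike.mem_coe, hA]; exact hu.1
  refine AddSubmonoid.closure_induction
    (motive := fun x _ => IsIrredElem (M : Set (I →₀ ℤ)) x → x ∈ A) ?_ ?_ ?_ hu' hu
  · exact fun x hx _ => hx
  · intro h; exact absurd rfl h.2.1
  · intro x y hx hy ihx ihy h
    have hxM : x ∈ M := by rw [← SetLike.mem_coe, ← hA]; exact hx
    have hyM : y ∈ M := by rw [← SetLike.mem_coe, ← hA]; exact hy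
    rcases h.2.2 x hxM y hyM rfl with h0 | h0
    · subst h0; simpa using ihy (by simpa using h)
    · subst h0; simpa using ihx (by simpa using h)

lemma closure_irred_eq {I : Type*} (M : AddSubmonoid (I →₀ ℤ))
    (hnn : ∀ u ∈ M, FsNonneg u) :
    (AddSubmonoid.closure (IrrSet (M : Set (I →₀ ℤ))) : Set (I →₀ ℤ)) = ↑M := by
  apply subset_antisymm
  · intro x hx
    exact (AddSubmonoid.closure_le.mpr (fun v hv => hv.1) : _ ≤ M) hx
  · intro x hx
    exact mem_closure_irred M hnn x hx

lemma hilbert_iff {I : Type*} (M : AddSubmonoid (I →₀ ℤ))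
    (hnn : ∀ u ∈ M, FsNonneg u) (H : Set (I →₀ ℤ)) :
    IsHilbertBasis (M : Set (I →₀ ℤ)) H ↔ H = IrrSet (M : Set (I →₀ ℤ)) := by
  constructor
  · rintro ⟨hH1, hH2, hH3⟩
    apply subset_antisymm
    · exact hH3 _ (fun v hv => hv.1) (closure_irred_eq M hnn)
    · exact fun u hu => irred_mem_of_closure_eq M hH2 hu
  · rintro rfl
    exact ⟨fun v hv => hv.1, closure_irred_eq M hnn,
      fun A hA hA2 u hu => irred_mem_of_closure_eq M hA2 hu⟩

end MCSAux
namespace MCSAux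

open Finsupp AddSubmonoid

/-! ### Permutation action basics -/

def permEquiv (d c : ℕ) (σ : Equiv.Perm ℕ) : ((Fin d → ℕ) × Fin c) ≃ ((Fin d → ℕ) × Fin c) :=
  Equiv.prodCongr ((Equiv.refl (Fin d)).arrowCongr σ) (Equiv.refl (Fin c))

lemma permActd_eq (d c : ℕ) (σ : Equiv.Perm ℕ) (u : (Fin d → ℕ) × Fin c →₀ ℤ) :
    permActd d c σ u = Finsupp.domCongr (M := ℤ) (permEquiv d c σ) u := rfl

lemma permActd_apply (d c : ℕ) (σ : Equiv.Perm ℕ) (u : (Fin d → ℕ) × Fin c →₀ ℤ)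
    (q : (Fin d → ℕ) × Fin c) :
    permActd d c σ u q = u (fun k => σ.symm (q.1 k), q.2) := by
  rw [permActd]
  rw [Finsupp.equivMapDomain_apply]
  congr 1

lemma permActd_add (d c : ℕ) (σ : Equiv.Perm ℕ) (u v : (Fin d → ℕ) × Fin c →₀ ℤ) :
    permActd d c σ (u + v) = permActd d c σ u + permActd d c σ v := by
  simp only [permActd_eq, map_add]

lemma permActd_zero (d c : ℕ) (σ : Equiv.Perm ℕ) : permActd d c σ (0 : (Fin d → ℕ) × Fin c →₀ ℤ) = 0 := by
  simp only [permActd_eq, map_zero]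

lemma permActd_list_sum (d c : ℕ) (σ : Equiv.Perm ℕ) (l : List ((Fin d → ℕ) × Fin c →₀ ℤ)) :
    permActd d c σ l.sum = (l.map (permActd d c σ)).sum := by
  simp only [permActd_eq]
  exact map_list_sum (Finsupp.domCongr (M := ℤ) (permEquiv d c σ)).toAddMonoidHom l

lemma permActd_symm_cancel (d c : ℕ) (σ : Equiv.Perm ℕ) (u : (Fin d → ℕ) × Fin c →₀ ℤ) :
    permActd d c σ⁻¹ (permActd d c σ u) = u := by
  ext q
  rw [permActd_apply, permActd_apply]
  have : ((fun k => σ.symm (((fun k => (σ⁻¹).symm (q.1 k), q.2) : (Fin d → ℕ) × Fin c).1 k),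
      ((fun k => (σ⁻¹).symm (q.1 k), q.2) : (Fin d → ℕ) × Fin c).2) : (Fin d → ℕ) × Fin c) = q := by
    simp only []
    ext k
    · simp [Equiv.Perm.inv_def]
    · rfl
  rw [this]

lemma permActd_cancel_symm (d c : ℕ) (σ : Equiv.Perm ℕ) (u : (Fin d → ℕ) × Fin c →₀ ℤ) :
    permActd d c σ (permActd d c σ⁻¹ u) = u := by
  have := permActd_symm_cancel d c σ⁻¹ u
  rwa [inv_inv] at this

lemma permActd_fsNonneg (d c : ℕ) (σ : Equiv.Perm ℕ) {u : (Fin d → ℕ) × Fin c →₀ ℤ}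
    (hu : FsNonneg u) : FsNonneg (permActd d c σ u) := by
  intro q
  rw [permActd_apply]
  exact hu _

lemma permActd_support (d c : ℕ) (σ : Equiv.Perm ℕ) (u : (Fin d → ℕ) × Fin c →₀ ℤ) :
    (permActd d c σ u).support = u.support.map (permEquiv d c σ).toEmbedding := by
  ext q
  rw [Finset.mem_map_equiv, Finsupp.mem_support_iff, Finsupp.mem_support_iff,
    permActd_apply]
  constructor
  · intro h
    convert h using 2
    rfl
  · intro h
    convert h using 2
    rfl

lemma permActd_eq_zero_iff (d c : ℕ) (σ : Equiv.Perm ℕ) (u : (Fin d → ℕ) × Fin c →₀ ℤ) :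
    permActd d c σ u = 0 ↔ u = 0 := by
  constructor
  · intro h
    have := congrArg (permActd d c σ⁻¹) h
    rwa [permActd_symm_cancel, permActd_zero] at this
  · rintro rfl; exact permActd_zero d c σ

end MCSAux
namespace MCSAux

open Finsupp AddSubmonoid

/-! ### Sym(n) basics -/

lemma inSymN_inv {n : ℕ} {σ : Equiv.Perm ℕ} (h : InSymN n σ) : InSymN n σ⁻¹ := by
  intro i hi
  have h1 := h i hi
  calc σ⁻¹ i = σ⁻¹ (σ i) := by rw [h1]
    _ = i := σ.symm_apply_apply i

lemma inSymN_mono {m n : ℕ} {σ : Equiv.Perm ℕ} (h : m ≤ n) (hs : InSymN m σ) : InSymN n σ :=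
  fun i hi => hs i (le_trans h hi)

lemma inSymN_isFinPerm {n : ℕ} {σ : Equiv.Perm ℕ} (h : InSymN n σ) : IsFinPerm σ := by
  apply Set.Finite.subset (Set.finite_Iio n)
  intro i hi
  by_contra h'
  simp only [Set.mem_Iio, not_lt] at h'
  exact hi (h i h')

lemma isFinPerm_bound {σ : Equiv.Perm ℕ} (h : IsFinPerm σ) : ∃ n, InSymN n σ := by
  refine ⟨h.toFinset.sup id + 1, ?_⟩
  intro i hi
  by_contra hne
  have hmem : i ∈ h.toFinset := h.mem_toFinset.mpr hne
  have := Finset.le_sup (f := id) hmem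
  simp only [id] at this
  omega

lemma isFinPerm_inv {σ : Equiv.Perm ℕ} (h : IsFinPerm σ) : IsFinPerm σ⁻¹ := by
  obtain ⟨n, hn⟩ := isFinPerm_bound h
  exact inSymN_isFinPerm (inSymN_inv hn)

lemma inSymN_maps_lt {n : ℕ} {σ : Equiv.Perm ℕ} (h : InSymN n σ) {i : ℕ} (hi : i < n) :
    σ i < n := by
  by_contra h'
  push_neg at h'
  have h1 := h _ h'
  have h2 := σ.injective h1
  omega

/-! ### Permutation extension lemmas -/

lemma exists_perm_extend (K : ℕ) (A B : Finset ℕ) (hA : ∀ i ∈ A, i < K) (hB : ∀ j ∈ B, j < K)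
    (e : {x // x ∈ A} ≃ {x // x ∈ B}) :
    ∃ τ : Equiv.Perm ℕ, InSymN K τ ∧ ∀ i (h : i ∈ A), τ i = (e ⟨i, h⟩ : ℕ) := by
  classical
  have hAsub : A ⊆ Finset.range K := fun i hi => Finset.mem_range.mpr (hA i hi)
  have hBsub : B ⊆ Finset.range K := fun j hj => Finset.mem_range.mpr (hB j hj)
  have hcard : A.card = B.card := by
    have h1 : Fintype.card {x // x ∈ A} = Fintype.card {x // x ∈ B} := Fintype.card_congr e
    simpa [Fintype.card_coe] using h1
  set C := Finset.range K \ A with hC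
  set D := Finset.range K \ B with hD
  have hCD : C.card = D.card := by
    rw [hC, hD, Finset.card_sdiff_of_subset hAsub, Finset.card_sdiff_of_subset hBsub, hcard]
  let e₂ : {x // x ∈ C} ≃ {x // x ∈ D} := Finset.equivOfCardEq hCD
  set f : ℕ → ℕ := fun i =>
    if hi : i ∈ A then (e ⟨i, hi⟩ : ℕ) else if hi' : i ∈ C then (e₂ ⟨i, hi'⟩ : ℕ) else i with hf
  -- images
  have hfA : ∀ i (hi : i ∈ A), f i = (e ⟨i, hi⟩ : ℕ) := by
    intro i hi; simp only [hf, dif_pos hi]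
  have hfC : ∀ i (hi' : i ∈ C), f i = (e₂ ⟨i, hi'⟩ : ℕ) := by
    intro i hi'
    have hiA : i ∉ A := by
      rw [hC] at hi'; exact (Finset.mem_sdiff.mp hi').2
    simp only [hf, dif_neg hiA, dif_pos hi']
  have hfO : ∀ i, i ∉ A → i ∉ C → f i = i := by
    intro i h1 h2; simp only [hf, dif_neg h1, dif_neg h2]
  have hout : ∀ i, i ∉ A → i ∉ C → K ≤ i := by
    intro i h1 h2
    by_contra h'
    push_neg at h'
    exact h2 (Finset.mem_sdiff.mpr ⟨Finset.mem_range.mpr h', h1⟩)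
  have hDnotB : ∀ j, j ∈ D → j ∉ B := fun j hj => (Finset.mem_sdiff.mp hj).2
  have hCnotA : ∀ j, j ∈ C → j ∉ A := fun j hj => (Finset.mem_sdiff.mp hj).2
  have hbij : Function.Bijective f := by
    constructor
    · intro i j hij
      by_cases hiA : i ∈ A
      · by_cases hjA : j ∈ A
        · rw [hfA i hiA, hfA j hjA] at hij
          have : e ⟨i, hiA⟩ = e ⟨j, hjA⟩ := Subtype.ext hij
          have := e.injective this
          exact congrArg Subtype.val this
        · by_cases hjC : j ∈ C
          · rw [hfA i hiA, hfC j hjC] at hij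
            exact absurd (hij ▸ (e ⟨i, hiA⟩).2) (hDnotB _ (e₂ ⟨j, hjC⟩).2 ∘ (hij ▸ id))
          · rw [hfA i hiA, hfO j hjA hjC] at hij
            have := hB _ (e ⟨i, hiA⟩).2
            have := hout j hjA hjC
            omega
      · by_cases hiC : i ∈ C
        · by_cases hjA : j ∈ A
          · rw [hfC i hiC, hfA j hjA] at hij
            exact absurd ((e ⟨j, hjA⟩).2) (hij ▸ hDnotB _ (e₂ ⟨i, hiC⟩).2)
          · by_cases hjC : j ∈ C
            · rw [hfC i hiC, hfC j hjC] at hij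
              have : e₂ ⟨i, hiC⟩ = e₂ ⟨j, hjC⟩ := Subtype.ext hij
              exact congrArg Subtype.val (e₂.injective this)
            · rw [hfC i hiC, hfO j hjA hjC] at hij
              have h1 : ((e₂ ⟨i, hiC⟩ : ℕ)) ∈ D := (e₂ ⟨i, hiC⟩).2
              have h2 := Finset.mem_range.mp (Finset.mem_sdiff.mp h1).1
              have := hout j hjA hjC
              omega
        · by_cases hjA : j ∈ A
          · rw [hfO i hiA hiC, hfA j hjA] at hij
            have := hB _ (e ⟨j, hjA⟩).2
            have := hout i hiA hiC
            omega
          · by_cases hjC : j ∈ C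
            · rw [hfO i hiA hiC, hfC j hjC] at hij
              have h1 : ((e₂ ⟨j, hjC⟩ : ℕ)) ∈ D := (e₂ ⟨j, hjC⟩).2
              have h2 := Finset.mem_range.mp (Finset.mem_sdiff.mp h1).1
              have := hout i hiA hiC
              omega
            · rw [hfO i hiA hiC, hfO j hjA hjC] at hij
              exact hij
    · intro j
      by_cases hjB : j ∈ B
      · refine ⟨(e.symm ⟨j, hjB⟩ : ℕ), ?_⟩
        rw [hfA _ (e.symm ⟨j, hjB⟩).2]
        simp
      · by_cases hjD : j ∈ D
        · refine ⟨(e₂.symm ⟨j, hjD⟩ : ℕ), ?_⟩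
          rw [hfC _ (e₂.symm ⟨j, hjD⟩).2]
          simp
        · refine ⟨j, ?_⟩
          have hjA : j ∉ A := by
            intro h
            have : (e ⟨j, h⟩ : ℕ) ∈ B := (e ⟨j, h⟩).2
            -- j ∈ A doesn't directly contradict; instead: A ⊆ range K, so j < K; j ∉ B ∧ j ∉ D → j ∉ range K
            have hjK := hA j h
            exact absurd (Finset.mem_sdiff.mpr ⟨Finset.mem_range.mpr hjK, hjB⟩) hjD
          have hjC : j ∉ C := by
            intro h
            have hjK := Finset.mem_range.mp (Finset.mem_sdiff.mp h).1
            exact absurd (Finset.mem_sdiff.mpr ⟨Finset.mem_range.mpr hjK, hjB⟩) hjD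
          exact hfO j hjA hjC
  refine ⟨Equiv.ofBijective f hbij, ?_, ?_⟩
  · intro i hi
    have h1 : i ∉ A := fun h => by have := hA i h; omega
    have h2 : i ∉ C := fun h => by
      have := Finset.mem_range.mp (Finset.mem_sdiff.mp h).1; omega
    exact hfO i h1 h2
  · intro i hi
    exact hfA i hi

lemma exists_inSymN_agree (n : ℕ) (σ : Equiv.Perm ℕ) (T : Finset ℕ)
    (hT : ∀ i ∈ T, i < n) (hσT : ∀ i ∈ T, σ i < n) :
    ∃ τ : Equiv.Perm ℕ, InSymN n τ ∧ ∀ i ∈ T, τ i = σ i := by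
  classical
  have hmemim : ∀ y : {x // x ∈ T.image σ}, σ.symm (y : ℕ) ∈ T := by
    intro y
    obtain ⟨i, hi, hiy⟩ := Finset.mem_image.mp y.2
    rw [← hiy]
    simpa using hi
  let e : {x // x ∈ T} ≃ {x // x ∈ T.image σ} :=
    { toFun := fun x => ⟨σ x, Finset.mem_image_of_mem σ x.2⟩
      invFun := fun y => ⟨σ.symm y, hmemim y⟩
      left_inv := fun x => by simp
      right_inv := fun y => by simp }
  obtain ⟨τ, h1, h2⟩ := exists_perm_extend n T (T.image σ) hT
    (by
      intro j hj
      obtain ⟨i, hi, rfl⟩ := Finset.mem_image.mp hj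
      exact hσT i hi) e
  exact ⟨τ, h1, fun i hi => h2 i hi⟩

lemma exists_finPerm_compress (T : Finset ℕ) :
    ∃ τ : Equiv.Perm ℕ, IsFinPerm τ ∧ ∀ i ∈ T, τ i < T.card := by
  classical
  set K := max ((T.sup id) + 1) T.card with hK
  have hT : ∀ i ∈ T, i < K := by
    intro i hi
    have := Finset.le_sup (f := id) hi
    simp only [id] at this
    omega
  have hR : ∀ j ∈ Finset.range T.card, j < K := by
    intro j hj
    have := Finset.mem_range.mp hj
    omega
  have hc : T.card = (Finset.range T.card).card := by simp
  obtain ⟨τ, h1, h2⟩ := exists_perm_extend K T (Finset.range T.card) hT hR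
    (Finset.equivOfCardEq hc)
  refine ⟨τ, inSymN_isFinPerm h1, ?_⟩
  intro i hi
  rw [h2 i hi]
  exact Finset.mem_range.mp (Finset.equivOfCardEq hc ⟨i, hi⟩).2

end MCSAux
namespace MCSAux

open Finsupp AddSubmonoid

/-! ### Coordinate sets and support -/

def coordSet {d c : ℕ} (u : (Fin d → ℕ) × Fin c →₀ ℤ) : Finset ℕ :=
  u.support.biUnion fun q => Finset.image q.1 Finset.univ

lemma mem_coordSet {d c : ℕ} {u : (Fin d → ℕ) × Fin c →₀ ℤ} {q : (Fin d → ℕ) × Fin c}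
    (hq : u q ≠ 0) (k : Fin d) : q.1 k ∈ coordSet u :=
  Finset.mem_biUnion.mpr ⟨q, Finsupp.mem_support_iff.mpr hq,
    Finset.mem_image_of_mem _ (Finset.mem_univ k)⟩

lemma coordSet_spec {d c : ℕ} {u : (Fin d → ℕ) × Fin c →₀ ℤ} {i : ℕ}
    (hi : i ∈ coordSet u) : ∃ q, u q ≠ 0 ∧ ∃ k, q.1 k = i := by
  obtain ⟨q, hq, hi'⟩ := Finset.mem_biUnion.mp hi
  obtain ⟨k, _, hk⟩ := Finset.mem_image.mp hi'
  exact ⟨q, Finsupp.mem_support_iff.mp hq, k, hk⟩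

lemma coordSet_card_le {d c : ℕ} (u : (Fin d → ℕ) × Fin c →₀ ℤ) :
    (coordSet u).card ≤ u.support.card * d := by
  refine le_trans (Finset.card_biUnion_le) ?_
  refine le_trans (Finset.sum_le_card_nsmul u.support _ d ?_) ?_
  · intro q _
    calc (Finset.image q.1 Finset.univ).card ≤ (Finset.univ : Finset (Fin d)).card :=
        Finset.card_image_le
      _ = d := by simp
  · simp [smul_eq_mul]

lemma suppIn_iff_coord {d c n : ℕ} {u : (Fin d → ℕ) × Fin c →₀ ℤ} :
    SuppIn d c n u ↔ ∀ i ∈ coordSet u, i < n := by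
  constructor
  · intro h i hi
    obtain ⟨q, hq, k, rfl⟩ := coordSet_spec hi
    exact h q hq k
  · intro h q hq k
    exact h _ (mem_coordSet hq k)

lemma suppIn_mono {d c m n : ℕ} (h : m ≤ n) {u : (Fin d → ℕ) × Fin c →₀ ℤ}
    (hu : SuppIn d c m u) : SuppIn d c n u :=
  fun q hq k => lt_of_lt_of_le (hu q hq k) h

lemma permActd_apply_perm {d c : ℕ} (σ : Equiv.Perm ℕ) (u : (Fin d → ℕ) × Fin c →₀ ℤ)
    (q : (Fin d → ℕ) × Fin c) :
    permActd d c σ u (fun k => σ (q.1 k), q.2) = u q := by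
  rw [permActd_apply]
  congr 1
  ext k
  · simp
  · rfl

lemma permActd_congr_of_agree {d c : ℕ} {σ τ : Equiv.Perm ℕ} {u : (Fin d → ℕ) × Fin c →₀ ℤ}
    (h : ∀ i ∈ coordSet u, τ i = σ i) :
    permActd d c τ u = permActd d c σ u := by
  have aux : ∀ (α β : Equiv.Perm ℕ), (∀ i ∈ coordSet u, α i = β i) →
      ∀ (g : Fin d → ℕ) (j : Fin c), u (fun k => α.symm (g k), j) ≠ 0 →
        u (fun k => α.symm (g k), j) = u (fun k => β.symm (g k), j) := by
    intro α β hab g j hne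
    have heq : (fun k => β.symm (g k)) = fun k => α.symm (g k) := by
      funext k
      have h1 : α.symm (g k) ∈ coordSet u :=
        mem_coordSet (q := (fun k => α.symm (g k), j)) hne k
      have h2 := hab _ h1
      have h3 : β (α.symm (g k)) = g k := by
        rw [← h2]; exact α.apply_symm_apply (g k)
      calc β.symm (g k) = β.symm (β (α.symm (g k))) := by rw [h3]
        _ = α.symm (g k) := β.symm_apply_apply _
    rw [heq]
  ext q
  obtain ⟨g, j⟩ := q
  rw [permActd_apply, permActd_apply]
  simp only []
  by_cases h1 : u (fun k => τ.symm (g k), j) = 0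
  · by_cases h2 : u (fun k => σ.symm (g k), j) = 0
    · rw [h1, h2]
    · exact absurd ((aux σ τ (fun i hi => (h i hi).symm) g j h2).trans h1) h2
  · exact aux τ σ h g j h1

lemma permActd_push {d c : ℕ} {σ : Equiv.Perm ℕ} {b : (Fin d → ℕ) × Fin c →₀ ℤ} {p n : ℕ}
    (hpn : p ≤ n) (hb : SuppIn d c p b) (hs : SuppIn d c n (permActd d c σ b)) :
    ∃ τ : Equiv.Perm ℕ, InSymN n τ ∧ permActd d c τ b = permActd d c σ b := by
  have hT : ∀ i ∈ coordSet b, i < n :=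
    fun i hi => lt_of_lt_of_le ((suppIn_iff_coord.mp hb) i hi) hpn
  have hσT : ∀ i ∈ coordSet b, σ i < n := by
    intro i hi
    obtain ⟨q, hq, k, rfl⟩ := coordSet_spec hi
    have hne : permActd d c σ b (fun k => σ (q.1 k), q.2) ≠ 0 := by
      rw [permActd_apply_perm]; exact hq
    exact hs _ hne k
  obtain ⟨τ, h1, h2⟩ := exists_inSymN_agree n σ (coordSet b) hT hσT
  exact ⟨τ, h1, permActd_congr_of_agree h2⟩

/-! ### List sum lemmas -/

lemma fsNonneg_list_sum {I : Type*} (l : List (I →₀ ℤ)) (h : ∀ y ∈ l, FsNonneg y) :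
    FsNonneg l.sum := by
  induction l with
  | nil => intro i; simp
  | cons a t IH =>
    intro i
    rw [List.sum_cons, Finsupp.add_apply]
    have h1 := h a (List.mem_cons_self) i
    have h2 := IH (fun y hy => h y (List.mem_cons_of_mem a hy)) i
    omega

lemma le_list_sum {I : Type*} (l : List (I →₀ ℤ)) (h : ∀ y ∈ l, FsNonneg y)
    {y : I →₀ ℤ} (hy : y ∈ l) (q : I) : y q ≤ l.sum q := by
  induction l with
  | nil => cases hy
  | cons a t IH =>
    rw [List.sum_cons, Finsupp.add_apply]
    rcases List.mem_cons.mp hy with rfl | hyt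
    · have := fsNonneg_list_sum t (fun z hz => h z (List.mem_cons_of_mem _ hz)) q
      omega
    · have h1 := h a (List.mem_cons_self) q
      have h2 := IH (fun z hz => h z (List.mem_cons_of_mem a hz)) hyt
      omega

/-! ### Orbits -/

lemma symOrbitNd_subset_symOrbitd {d c : ℕ} (n : ℕ) (B : Set ((Fin d → ℕ) × Fin c →₀ ℤ)) :
    symOrbitNd d c n B ⊆ symOrbitd d c B := by
  rintro w ⟨σ, hσ, b, hb, rfl⟩
  exact ⟨σ, inSymN_isFinPerm hσ, b, hb, rfl⟩

lemma symOrbitNd_mono {d c : ℕ} (n : ℕ) {B B' : Set ((Fin d → ℕ) × Fin c →₀ ℤ)}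
    (h : B ⊆ B') : symOrbitNd d c n B ⊆ symOrbitNd d c n B' := by
  rintro w ⟨σ, hσ, b, hb, rfl⟩
  exact ⟨σ, hσ, b, h hb, rfl⟩

lemma sat_push {d c : ℕ} (p m : ℕ) (hpm : p ≤ m) (B : Set ((Fin d → ℕ) × Fin c →₀ ℤ))
    (hBnn : ∀ b ∈ B, FsNonneg b) (hBs : ∀ b ∈ B, SuppIn d c p b)
    {u : (Fin d → ℕ) × Fin c →₀ ℤ}
    (hu : u ∈ AddSubmonoid.closure (symOrbitd d c B)) (hus : SuppIn d c m u) :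
    u ∈ AddSubmonoid.closure (symOrbitNd d c m B) := by
  obtain ⟨l, hl, rfl⟩ := AddSubmonoid.exists_list_of_mem_closure hu
  have hlnn : ∀ y ∈ l, FsNonneg y := by
    intro y hy
    obtain ⟨σ, _, b, hb, rfl⟩ := hl y hy
    exact permActd_fsNonneg d c σ (hBnn b hb)
  refine AddSubmonoid.list_sum_mem _ ?_
  intro y hy
  obtain ⟨σ, hσ, b, hb, rfl⟩ := hl y hy
  have hys : SuppIn d c m (permActd d c σ b) := by
    intro q hq k
    have h0 : 0 ≤ permActd d c σ b q := permActd_fsNonneg d c σ (hBnn b hb) q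
    have hle := le_list_sum l hlnn hy q
    refine hus q ?_ k
    intro h'
    rw [h'] at hle
    omega
  obtain ⟨τ, hτ, heq⟩ := permActd_push hpm (hBs b hb) hys
  exact AddSubmonoid.subset_closure ⟨τ, hτ, b, hb, heq.symm⟩

lemma permActd_mem_closure {d c : ℕ} {σ : Equiv.Perm ℕ}
    {S S' : Set ((Fin d → ℕ) × Fin c →₀ ℤ)}
    (h : ∀ s ∈ S, permActd d c σ s ∈ S') {u : (Fin d → ℕ) × Fin c →₀ ℤ}
    (hu : u ∈ AddSubmonoid.closure S) :
    permActd d c σ u ∈ AddSubmonoid.closure S' := by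
  obtain ⟨l, hl, rfl⟩ := AddSubmonoid.exists_list_of_mem_closure hu
  rw [permActd_list_sum]
  refine AddSubmonoid.list_sum_mem _ ?_
  intro y hy
  obtain ⟨x, hx, rfl⟩ := List.mem_map.mp hy
  exact AddSubmonoid.subset_closure (h x (hl x hx))

lemma symOrbitNd_finite {d c : ℕ} (n : ℕ) {B : Set ((Fin d → ℕ) × Fin c →₀ ℤ)}
    (hB : B.Finite) : (symOrbitNd d c n B).Finite := by
  have h1 : {σ : Equiv.Perm ℕ | InSymN n σ}.Finite := by
    have hfin : Finite {σ : Equiv.Perm ℕ // InSymN n σ} := by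
      refine Finite.of_injective
        (fun σ => fun i : Fin n => (⟨σ.1 i, inSymN_maps_lt σ.2 i.2⟩ : Fin n)) ?_
      intro σ τ h
      refine Subtype.ext (Equiv.ext fun i => ?_)
      by_cases hi : i < n
      · have := congrFun h ⟨i, hi⟩
        exact congrArg Fin.val this
      · push_neg at hi
        rw [σ.2 i hi, τ.2 i hi]
    exact Set.finite_coe_iff.mp hfin
  have h2 : symOrbitNd d c n B = Set.image2 (permActd d c) {σ | InSymN n σ} B := by
    ext w
    simp only [symOrbitNd, Set.mem_setOf_eq, Set.mem_image2]
    constructor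
    · rintro ⟨σ, hσ, b, hb, rfl⟩; exact ⟨σ, hσ, b, hb, rfl⟩
    · rintro ⟨σ, hσ, b, hb, rfl⟩; exact ⟨σ, hσ, b, hb, rfl⟩
  rw [h2]
  exact Set.Finite.image2 _ h1 hB

end MCSAux

open MCSAux in
set_option maxHeartbeats 1000000 in
/-- For a `Sym`-invariant chain of nonnegative monoids `(M n)_{n ≥ 1}`
with limit `M = ⋃_{n ≥ 1} M n`, the following are equivalent: (i) the chain stabilizes
and `M n` is finitely generated for large `n`; (ii) some finite `H_p ⊆ M_p` is an
equivariant Hilbert basis of `M_n` for all `n ≥ p`; (iii) eventually `M_n = M ∩ ℤ^{(I_n)}`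
and `M_n` has a finite Hilbert basis of bounded support size; (iv) `M` has a finite
equivariant Hilbert basis. -/
theorem monoid_chain_stabilization_tfae (d c : ℕ) (hd : 0 < d) (hc : 0 < c)
    (M : ℕ → AddSubmonoid ((Fin d → ℕ) × Fin c →₀ ℤ))
    (hnn : ∀ n, ∀ u ∈ M n, FsNonneg u)
    (hsupp : ∀ n, ∀ u ∈ M n, SuppIn d c n u)
    (hmono : ∀ m n, m ≤ n → M m ≤ M n)
    (hinv : ∀ n σ, InSymN n σ → ∀ u ∈ M n, permActd d c σ u ∈ M n) :
    List.TFAE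
      [ (∃ p, 1 ≤ p ∧ ∀ m n, p ≤ m → m ≤ n →
            M n = AddSubmonoid.closure
              (symOrbitNd d c n (↑(M m) : Set ((Fin d → ℕ) × Fin c →₀ ℤ)))) ∧
          (∃ N, ∀ n, N ≤ n → (M n).FG),
        ∃ p, 1 ≤ p ∧ ∃ Hp : Finset ((Fin d → ℕ) × Fin c →₀ ℤ),
          (↑Hp : Set ((Fin d → ℕ) × Fin c →₀ ℤ))
              ⊆ (↑(M p) : Set ((Fin d → ℕ) × Fin c →₀ ℤ)) ∧
          ∀ n, p ≤ n →
            IsHilbertBasis (↑(M n) : Set ((Fin d → ℕ) × Fin c →₀ ℤ))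
              (symOrbitNd d c n ↑Hp),
        ∃ q q', 1 ≤ q ∧ 1 ≤ q' ∧ ∀ n, q ≤ n →
          ((↑(M n) : Set ((Fin d → ℕ) × Fin c →₀ ℤ))
              = {u | (∃ m, 1 ≤ m ∧ u ∈ M m) ∧ SuppIn d c n u} ∧
            ∃ Hn : Finset ((Fin d → ℕ) × Fin c →₀ ℤ),
              (∀ u ∈ Hn, u.support.card ≤ q') ∧
              IsHilbertBasis (↑(M n) : Set ((Fin d → ℕ) × Fin c →₀ ℤ))
                (↑Hn : Set ((Fin d → ℕ) × Fin c →₀ ℤ))),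
        ∃ Hf : Finset ((Fin d → ℕ) × Fin c →₀ ℤ),
          (↑Hf : Set ((Fin d → ℕ) × Fin c →₀ ℤ)) ⊆ {u | ∃ m, 1 ≤ m ∧ u ∈ M m} ∧
          IsHilbertBasis {u | ∃ m, 1 ≤ m ∧ u ∈ M m} (symOrbitd d c ↑Hf) ] := by
  classical
  set Mu : AddSubmonoid ((Fin d → ℕ) × Fin c →₀ ℤ) :=
    { carrier := {u | ∃ m, 1 ≤ m ∧ u ∈ M m}
      zero_mem' := ⟨1, le_rfl, zero_mem _⟩
      add_mem' := by
        rintro a b ⟨m1, hm1, ha⟩ ⟨m2, hm2, hb⟩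
        exact ⟨max m1 m2, le_trans hm1 (le_max_left _ _),
          add_mem (hmono m1 _ (le_max_left _ _) ha) (hmono m2 _ (le_max_right _ _) hb)⟩ }
    with hMudef
  have hMuset : {u : (Fin d → ℕ) × Fin c →₀ ℤ | ∃ m, 1 ≤ m ∧ u ∈ M m}
      = (Mu : Set ((Fin d → ℕ) × Fin c →₀ ℤ)) := rfl
  have memMu : ∀ n u, u ∈ M n → u ∈ Mu := fun n u hu =>
    ⟨max n 1, le_max_right _ _, hmono n _ (le_max_left _ _) hu⟩
  have hMu_nn : ∀ u ∈ Mu, FsNonneg u := by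
    rintro u ⟨m, _, hm⟩
    exact hnn m u hm
  have hMu_inv : ∀ σ, IsFinPerm σ → ∀ u ∈ Mu, permActd d c σ u ∈ Mu := by
    rintro σ hσ u ⟨m, hm, hum⟩
    obtain ⟨k, hk⟩ := isFinPerm_bound hσ
    exact ⟨max m k, le_trans hm (le_max_left _ _),
      hinv _ σ (inSymN_mono (le_max_right _ _) hk) u (hmono m _ (le_max_left _ _) hum)⟩
  have hIrrMu_inv : ∀ σ, IsFinPerm σ → ∀ u,
      IsIrredElem (Mu : Set ((Fin d → ℕ) × Fin c →₀ ℤ)) u →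
      IsIrredElem (Mu : Set ((Fin d → ℕ) × Fin c →₀ ℤ)) (permActd d c σ u) := by
    rintro σ hσ u ⟨hu, h0, hmin⟩
    refine ⟨hMu_inv σ hσ u hu, ?_, ?_⟩
    · intro he
      exact h0 ((permActd_eq_zero_iff d c σ u).mp he)
    · intro v hv w hw heq
      have hfp := isFinPerm_inv hσ
      have hb_eq : u = permActd d c σ⁻¹ v + permActd d c σ⁻¹ w := by
        have := congrArg (permActd d c σ⁻¹) heq
        rwa [permActd_symm_cancel, permActd_add] at this
      rcases hmin _ (hMu_inv σ⁻¹ hfp v hv) _ (hMu_inv σ⁻¹ hfp w hw) hb_eq with h | h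
      · left
        have := congrArg (permActd d c σ) h
        rwa [permActd_cancel_symm, permActd_zero] at this
      · right
        have := congrArg (permActd d c σ) h
        rwa [permActd_cancel_symm, permActd_zero] at this
  tfae_have 1 → 2 := by
    rintro ⟨⟨p, hp1, hstab⟩, ⟨N, hFG⟩⟩
    set p₀ := max (max p N) 1 with hp₀def
    have hpp₀ : p ≤ p₀ := le_trans (le_max_left _ _) (le_max_left _ _)
    have hNp₀ : N ≤ p₀ := le_trans (le_max_right _ _) (le_max_left _ _)
    have hp₀1 : 1 ≤ p₀ := le_max_right _ _
    obtain ⟨S, hS⟩ := hFG p₀ hNp₀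
    have hSset : (AddSubmonoid.closure (↑S : Set ((Fin d → ℕ) × Fin c →₀ ℤ))
        : Set ((Fin d → ℕ) × Fin c →₀ ℤ)) = ↑(M p₀) := by rw [hS]
    have hIrrFin : (IrrSet (↑(M p₀) : Set ((Fin d → ℕ) × Fin c →₀ ℤ))).Finite :=
      Set.Finite.subset S.finite_toSet (fun u hu => irred_mem_of_closure_eq (M p₀) hSset hu)
    have hsat : ∀ m n, p₀ ≤ m → m ≤ n → ∀ u ∈ M n, SuppIn d c m u → u ∈ M m := by
      intro m n hm hmn u hu husp
      have h1 : u ∈ AddSubmonoid.closure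
          (symOrbitd d c (↑(M m) : Set ((Fin d → ℕ) × Fin c →₀ ℤ))) := by
        have h2 := hstab m n (le_trans hpp₀ hm) hmn
        rw [h2] at hu
        exact AddSubmonoid.closure_mono (symOrbitNd_subset_symOrbitd n _) hu
      have h3 := sat_push m m le_rfl _ (hnn m) (hsupp m) h1 husp
      have horb : symOrbitNd d c m (↑(M m) : Set ((Fin d → ℕ) × Fin c →₀ ℤ)) ⊆ ↑(M m) := by
        rintro w ⟨σ, hσ, b, hb, rfl⟩
        exact hinv m σ hσ b hb
      exact (AddSubmonoid.closure_le.mpr horb) h3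
    refine ⟨p₀, hp₀1, hIrrFin.toFinset, ?_, ?_⟩
    · rw [hIrrFin.coe_toFinset]
      exact fun u hu => hu.1
    · intro n hn
      rw [hilbert_iff (M n) (hnn n), hIrrFin.coe_toFinset]
      have hgen : (AddSubmonoid.closure (symOrbitNd d c n
          (IrrSet (↑(M p₀) : Set ((Fin d → ℕ) × Fin c →₀ ℤ))))
          : Set ((Fin d → ℕ) × Fin c →₀ ℤ)) = ↑(M n) := by
        apply subset_antisymm
        · refine (AddSubmonoid.closure_le.mpr ?_ : _ ≤ M n)
          rintro w ⟨σ, hσ, b, hb, rfl⟩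
          exact hinv n σ hσ b (hmono p₀ n hn hb.1)
        · intro u hu
          have hu' : u ∈ M n := hu
          rw [hstab p₀ n hpp₀ hn] at hu'
          have hsub : symOrbitNd d c n (↑(M p₀) : Set ((Fin d → ℕ) × Fin c →₀ ℤ)) ⊆
              ↑(AddSubmonoid.closure (symOrbitNd d c n
                (IrrSet (↑(M p₀) : Set ((Fin d → ℕ) × Fin c →₀ ℤ))))) := by
            rintro w ⟨σ, hσ, b, hb, rfl⟩
            refine permActd_mem_closure
              (S := IrrSet (↑(M p₀) : Set ((Fin d → ℕ) × Fin c →₀ ℤ)))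
              (S' := symOrbitNd d c n (IrrSet (↑(M p₀) : Set ((Fin d → ℕ) × Fin c →₀ ℤ))))
              ?_ (mem_closure_irred (M p₀) (hnn p₀) b hb)
            intro s hs
            exact ⟨σ, hσ, s, hs, rfl⟩
          exact AddSubmonoid.closure_le.mpr hsub hu'
      apply subset_antisymm
      · rintro w ⟨σ, hσ, b, hb, rfl⟩
        have hbn : b ∈ M n := hmono p₀ n hn hb.1
        refine ⟨hinv n σ hσ b hbn, ?_, ?_⟩
        · intro he
          exact hb.2.1 ((permActd_eq_zero_iff d c σ b).mp he)
        · intro v hv w' hw' heq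
          have hb_eq : b = permActd d c σ⁻¹ v + permActd d c σ⁻¹ w' := by
            have := congrArg (permActd d c σ⁻¹) heq
            rwa [permActd_symm_cancel, permActd_add] at this
          have hvM : permActd d c σ⁻¹ v ∈ M n := hinv n σ⁻¹ (inSymN_inv hσ) v hv
          have hwM : permActd d c σ⁻¹ w' ∈ M n := hinv n σ⁻¹ (inSymN_inv hσ) w' hw'
          have h1 : ∀ qq, 0 ≤ permActd d c σ⁻¹ v qq :=
            permActd_fsNonneg d c σ⁻¹ (hnn n v hv)
          have h2 : ∀ qq, 0 ≤ permActd d c σ⁻¹ w' qq :=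
            permActd_fsNonneg d c σ⁻¹ (hnn n w' hw')
          have hbapp : ∀ qq, b qq = permActd d c σ⁻¹ v qq + permActd d c σ⁻¹ w' qq := by
            intro qq
            rw [hb_eq]
            rfl
          have hsuppv : SuppIn d c p₀ (permActd d c σ⁻¹ v) := by
            intro qq hqq k
            refine hsupp p₀ b hb.1 qq ?_ k
            have := hbapp qq
            have := h1 qq
            have := h2 qq
            omega
          have hsuppw : SuppIn d c p₀ (permActd d c σ⁻¹ w') := by
            intro qq hqq k
            refine hsupp p₀ b hb.1 qq ?_ k
            have := hbapp qq
            have := h1 qq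
            have := h2 qq
            omega
          rcases hb.2.2 _ (hsat p₀ n le_rfl hn _ hvM hsuppv)
            _ (hsat p₀ n le_rfl hn _ hwM hsuppw) hb_eq with h | h
          · left
            have := congrArg (permActd d c σ) h
            rwa [permActd_cancel_symm, permActd_zero] at this
          · right
            have := congrArg (permActd d c σ) h
            rwa [permActd_cancel_symm, permActd_zero] at this
      · intro u hu
        exact irred_mem_of_closure_eq (M n) hgen hu
  tfae_have 2 → 3 := by
    rintro ⟨p, hp1, Hp, hHpM, hHB⟩
    refine ⟨p, max 1 (Hp.sup fun u => u.support.card), hp1, le_max_left _ _, ?_⟩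
    intro n hn
    have hHBn := hHB n hn
    constructor
    · apply subset_antisymm
      · intro u hu
        exact ⟨⟨max n 1, le_max_right _ _, hmono n _ (le_max_left _ _) hu⟩, hsupp n u hu⟩
      · rintro u ⟨⟨m, hm1, hum⟩, husp⟩
        by_cases hmn : m ≤ n
        · exact hmono m n hmn hum
        · push_neg at hmn
          have hHBm := hHB m (le_trans hn hmn.le)
          have hu1 : u ∈ AddSubmonoid.closure
              (symOrbitd d c (↑Hp : Set ((Fin d → ℕ) × Fin c →₀ ℤ))) := by
            have h2 : u ∈ AddSubmonoid.closure
                (symOrbitNd d c m (↑Hp : Set ((Fin d → ℕ) × Fin c →₀ ℤ))) := by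
              rw [← SetLike.mem_coe, hHBm.2.1]
              exact hum
            exact AddSubmonoid.closure_mono (symOrbitNd_subset_symOrbitd m _) h2
          have h3 := sat_push p n hn _ (fun b hb => hnn p b (hHpM hb))
            (fun b hb => hsupp p b (hHpM hb)) hu1 husp
          rw [← hHBn.2.1]
          exact h3
    · have hfin : (symOrbitNd d c n (↑Hp : Set ((Fin d → ℕ) × Fin c →₀ ℤ))).Finite :=
        symOrbitNd_finite n Hp.finite_toSet
      refine ⟨hfin.toFinset, ?_, ?_⟩
      · intro u hu
        rw [Set.Finite.mem_toFinset] at hu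
        obtain ⟨σ, hσ, b, hb, rfl⟩ := hu
        have hcard : (permActd d c σ b).support.card = b.support.card := by
          rw [permActd_support, Finset.card_map]
        rw [hcard]
        exact le_trans (Finset.le_sup (f := fun u => u.support.card) (Finset.mem_coe.mp hb))
          (le_max_right _ _)
      · rw [Set.Finite.coe_toFinset]
        exact hHBn
  tfae_have 3 → 4 := by
    rintro ⟨q, q', hq1, hq'1, h3⟩
    set n₀ := q + q' * d with hn₀def
    have hn₀q : q ≤ n₀ := Nat.le_add_right _ _
    obtain ⟨hfib₀, H₀, hH₀card, hH₀HB⟩ := h3 n₀ hn₀q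
    have hIrr_transfer : ∀ n, q ≤ n →
        IrrSet (↑(M n) : Set ((Fin d → ℕ) × Fin c →₀ ℤ))
          = {u | u ∈ IrrSet (Mu : Set ((Fin d → ℕ) × Fin c →₀ ℤ)) ∧ SuppIn d c n u} := by
      intro n hn
      have hfib := (h3 n hn).1
      ext u
      constructor
      · rintro ⟨huM, hu0, hmin⟩
        have husp := hsupp n u huM
        refine ⟨⟨memMu n u huM, hu0, ?_⟩, husp⟩
        intro v hv w hw heq
        have happ : ∀ qq, u qq = v qq + w qq := by
          intro qq
          rw [heq]
          rfl
        have hsv : SuppIn d c n v := by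
          intro qq hqq k
          have h1 := hMu_nn v hv qq
          have h2 := hMu_nn w hw qq
          have := happ qq
          exact husp qq (by omega) k
        have hsw : SuppIn d c n w := by
          intro qq hqq k
          have h1 := hMu_nn v hv qq
          have h2 := hMu_nn w hw qq
          have := happ qq
          exact husp qq (by omega) k
        have hvn : v ∈ M n := by
          rw [← SetLike.mem_coe, hfib]
          exact ⟨hv, hsv⟩
        have hwn : w ∈ M n := by
          rw [← SetLike.mem_coe, hfib]
          exact ⟨hw, hsw⟩
        exact hmin v hvn w hwn heq
      · rintro ⟨⟨huMu, hu0, hmin⟩, husp⟩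
        have huM : u ∈ M n := by
          rw [← SetLike.mem_coe, hfib]
          exact ⟨huMu, husp⟩
        exact ⟨huM, hu0, fun v hv w hw heq => hmin v (memMu n v hv) w (memMu n w hw) heq⟩
    have hH₀Irr : (↑H₀ : Set ((Fin d → ℕ) × Fin c →₀ ℤ))
        = IrrSet (↑(M n₀) : Set ((Fin d → ℕ) × Fin c →₀ ℤ)) :=
      (hilbert_iff (M n₀) (hnn n₀) _).mp hH₀HB
    refine ⟨H₀, ?_, ?_⟩
    · intro u hu
      have h1 : u ∈ IrrSet (↑(M n₀) : Set ((Fin d → ℕ) × Fin c →₀ ℤ)) := hH₀Irr ▸ hu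
      exact memMu n₀ u h1.1
    · rw [hMuset, hilbert_iff Mu hMu_nn]
      apply subset_antisymm
      · rintro w ⟨σ, hσ, b, hb, rfl⟩
        have hbIrr : IsIrredElem (Mu : Set ((Fin d → ℕ) × Fin c →₀ ℤ)) b := by
          have h1 : b ∈ IrrSet (↑(M n₀) : Set ((Fin d → ℕ) × Fin c →₀ ℤ)) := hH₀Irr ▸ hb
          rw [hIrr_transfer n₀ hn₀q] at h1
          exact h1.1
        exact hIrrMu_inv σ hσ b hbIrr
      · intro u hu
        obtain ⟨m, hm1, hum⟩ := hu.1
        have hun : u ∈ M (max m q) := hmono m (max m q) (le_max_left _ _) hum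
        have huIrr_n : u ∈ IrrSet (↑(M (max m q)) : Set ((Fin d → ℕ) × Fin c →₀ ℤ)) := by
          rw [hIrr_transfer (max m q) (le_max_right _ _)]
          exact ⟨hu, hsupp (max m q) u hun⟩
        obtain ⟨_, Hn, hHncard, hHnHB⟩ := h3 (max m q) (le_max_right _ _)
        have hmemHn : u ∈ Hn := by
          have hHnIrr := (hilbert_iff (M (max m q)) (hnn (max m q)) _).mp hHnHB
          have : u ∈ (↑Hn : Set ((Fin d → ℕ) × Fin c →₀ ℤ)) := hHnIrr ▸ huIrr_n
          exact this
        have hcard : u.support.card ≤ q' := hHncard u hmemHn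
        obtain ⟨τ, hτfp, hτlt⟩ := exists_finPerm_compress (coordSet u)
        have hTcard : (coordSet u).card ≤ q' * d :=
          le_trans (coordSet_card_le u) (Nat.mul_le_mul_right d hcard)
        have hsupp₀ : SuppIn d c n₀ (permActd d c τ u) := by
          intro qq hqq k
          have hne : u (fun k => τ.symm (qq.1 k), qq.2) ≠ 0 := by
            rwa [permActd_apply] at hqq
          have hmem : τ.symm (qq.1 k) ∈ coordSet u :=
            mem_coordSet (q := (fun k => τ.symm (qq.1 k), qq.2)) hne k
          have hlt := hτlt _ hmem
          rw [τ.apply_symm_apply] at hlt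
          omega
        have hIrrτ : IsIrredElem (Mu : Set ((Fin d → ℕ) × Fin c →₀ ℤ)) (permActd d c τ u) :=
          hIrrMu_inv τ hτfp u hu
        have hmem₀ : permActd d c τ u ∈ (↑H₀ : Set ((Fin d → ℕ) × Fin c →₀ ℤ)) := by
          rw [hH₀Irr, hIrr_transfer n₀ hn₀q]
          exact ⟨hIrrτ, hsupp₀⟩
        exact ⟨τ⁻¹, isFinPerm_inv hτfp, permActd d c τ u, hmem₀,
          (permActd_symm_cancel d c τ u).symm⟩
  tfae_have 4 → 1 := by
    rintro ⟨Hf, hHfMu, hHfHB⟩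
    choose g hg1 hg2 using fun b : {x // x ∈ Hf} => hHfMu b.2
    set p := max 1 (Hf.attach.sup g) with hpdef
    have hp1 : 1 ≤ p := le_max_left _ _
    have hHfMp : ∀ b ∈ Hf, b ∈ M p := by
      intro b hb
      refine hmono (g ⟨b, hb⟩) p ?_ (hg2 ⟨b, hb⟩)
      exact le_trans (Finset.le_sup (Finset.mem_attach Hf ⟨b, hb⟩)) (le_max_right _ _)
    have hMuCl : (AddSubmonoid.closure (symOrbitd d c (↑Hf : Set ((Fin d → ℕ) × Fin c →₀ ℤ)))
        : Set ((Fin d → ℕ) × Fin c →₀ ℤ)) = (Mu : Set ((Fin d → ℕ) × Fin c →₀ ℤ)) :=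
      hHfHB.2.1
    have hkey : ∀ n, p ≤ n → ∀ u ∈ M n,
        u ∈ AddSubmonoid.closure (symOrbitNd d c n (↑Hf : Set ((Fin d → ℕ) × Fin c →₀ ℤ))) := by
      intro n hpn u hu
      have h1 : u ∈ AddSubmonoid.closure
          (symOrbitd d c (↑Hf : Set ((Fin d → ℕ) × Fin c →₀ ℤ))) := by
        rw [← SetLike.mem_coe, hMuCl]
        exact memMu n u hu
      exact sat_push p n hpn _ (fun b hb => hnn p b (hHfMp b hb))
        (fun b hb => hsupp p b (hHfMp b hb)) h1 (hsupp n u hu)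
    constructor
    · refine ⟨p, hp1, ?_⟩
      intro m n hpm hmn
      apply le_antisymm
      · intro u hu
        refine AddSubmonoid.closure_mono (symOrbitNd_mono n ?_) (hkey n (le_trans hpm hmn) u hu)
        intro b hb
        exact hmono p m hpm (hHfMp b hb)
      · refine AddSubmonoid.closure_le.mpr ?_
        rintro w ⟨σ, hσ, b, hb, rfl⟩
        exact hinv n σ hσ b (hmono m n hmn hb)
    · refine ⟨p, ?_⟩
      intro n hpn
      refine ⟨(symOrbitNd_finite n Hf.finite_toSet).toFinset, ?_⟩
      apply le_antisymm
      · refine AddSubmonoid.closure_le.mpr ?_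
        intro w hw
        rw [Set.Finite.coe_toFinset] at hw
        obtain ⟨σ, hσ, b, hb, rfl⟩ := hw
        exact hinv n σ hσ b (hmono p n hpn (hHfMp b hb))
      · intro u hu
        rw [Set.Finite.coe_toFinset]
        exact hkey n hpn u hu
  tfae_finish
end

section
/- Let σ_1, …, σ_h ∈ Sym and let m, n ∈ ℕ with n ≥ hm + 1. Set D = (∪_{j=1}^h σ_j([m])) ∩ [n]. Then there exist σ ∈ Sym and τ_1, …, τ_h ∈ Sym(n) such that σ(k) = k for every k ∈ D, and σ(σ_j(i)) = τ_j(i) for all i ∈ [m] and all j ∈ [h]. -/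
open Finsupp

/-! The points `σ_j(i)`, `i < m`, form a set `S` of at most `h m < n` elements, so `S` has no
fewer free slots in `[n] \ S` than it has points outside `[n]`. A finitary `τ` moving the points
of `S \ [n]` into those slots and fixing `S ∩ [n]` makes every `τ ∘ σ_j` an injection of `[m]`
into `[n]`, and such an injection extends to a permutation in `Sym(n)`. -/

theorem Set.InjOn.exists_perm_extend {α : Type*} {s : Set α} {t : Finset α} {f : α → α}
    (hinj : Set.InjOn f s) (hst : s ⊆ t) (hf : Set.MapsTo f s t) :
    ∃ ρ : Equiv.Perm α, Set.EqOn ρ f s ∧ ∀ x ∉ t, ρ x = x := by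
  classical
  obtain ⟨g, hg⟩ := Set.MapsTo.exists_equiv_extend_of_card_eq (Fintype.card_coe t)
    (s := Subtype.val ⁻¹' s) (f := fun x => f x) (fun x hx => hf hx)
    (fun x hx y hy hxy => Subtype.ext (hinj hx hy hxy))
  refine ⟨Equiv.Perm.ofSubtype g, fun x hx => ?_, fun x hx => ?_⟩
  · rw [Equiv.Perm.ofSubtype_apply_of_mem g (hst hx)]
    exact hg _ hx
  · exact Equiv.Perm.ofSubtype_apply_of_not_mem g hx

theorem Finset.exists_injOn_mapsTo_of_card_le {α : Type*} {s t : Finset α}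
    (h : s.card ≤ t.card) :
    ∃ f : α → α, Set.InjOn f s ∧ Set.MapsTo f s t ∧ ∀ x ∈ s, x ∈ t → f x = x := by
  classical
  obtain ⟨u, hsu, hut, hu⟩ :=
    exists_subsuperset_card_eq (inter_subset_right (s₁ := s) (s₂ := t))
      (card_le_card inter_subset_left) h
  obtain ⟨g, hg⟩ := Set.MapsTo.exists_equiv_extend_of_card_eq (α := s) (t := u)
    (by rw [Fintype.card_coe, hu]) (s := Subtype.val ⁻¹' (t : Set α)) (f := Subtype.val)
    (fun x hx => hsu (mem_inter.2 ⟨x.2, hx⟩)) Subtype.val_injective.injOn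
  refine ⟨fun x => if hx : x ∈ s then g ⟨x, hx⟩ else x, fun x hx y hy hxy => ?_,
    fun x hx => ?_, fun x hx hxt => ?_⟩
  · simp only [mem_coe] at hx hy
    simp only [dif_pos hx, dif_pos hy] at hxy
    exact congrArg Subtype.val (g.injective (Subtype.ext hxy))
  · simp only [mem_coe] at hx
    simp only [dif_pos hx]
    exact hut (g ⟨x, hx⟩).2
  · simp only [dif_pos hx]
    exact hg ⟨x, hx⟩ hxt

theorem Finset.exists_perm_mapsTo_of_card_le {α : Type*} {s t : Finset α}
    (h : s.card ≤ t.card) :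
    ∃ τ : Equiv.Perm α, Set.MapsTo τ s t ∧ (∀ x ∈ s, x ∈ t → τ x = x) ∧
      ∀ x ∉ s, x ∉ t → τ x = x := by
  classical
  obtain ⟨f, hinj, hf, hfix⟩ := exists_injOn_mapsTo_of_card_le h
  obtain ⟨τ, hτ, hτt⟩ := hinj.exists_perm_extend (t := s ∪ t) (by simp)
    (hf.mono_right (by simp))
  refine ⟨τ, fun x hx => hτ hx ▸ hf hx, fun x hx hxt => (hτ hx).trans (hfix x hx hxt),
    fun x hxs hxt => hτt x (by simp [hxs, hxt])⟩

theorem pull_permutation_general (h m n : ℕ) (hn : h * m + 1 ≤ n)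
    (σ : Fin h → Equiv.Perm ℕ) :
    ∃ τ : Equiv.Perm ℕ, IsFinPerm τ ∧
      ∃ ρ : Fin h → Equiv.Perm ℕ, (∀ j, InSymN n (ρ j)) ∧
        (∀ k, k ∈ (⋃ j, (σ j) '' {i | i < m}) ∩ {k | k < n} → τ k = k) ∧
        (∀ j, ∀ i < m, τ ((σ j) i) = (ρ j) i) := by
  classical
  set S := (Finset.univ ×ˢ Finset.range m).image fun p : Fin h × ℕ => σ p.1 p.2
  have hS : ∀ j, ∀ i < m, σ j i ∈ S := fun j i hi =>
    Finset.mem_image.2 ⟨(j, i), by simpa using hi, rfl⟩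
  have hcard : S.card ≤ (Finset.range n).card := calc
    S.card ≤ h * m := Finset.card_image_le.trans (by simp)
    _ ≤ (Finset.range n).card := by rw [Finset.card_range]; omega
  obtain ⟨τ, hmaps, hfix, hsupp⟩ := Finset.exists_perm_mapsTo_of_card_le hcard
  have hρ : ∀ j, ∃ ρ : Equiv.Perm ℕ, InSymN n ρ ∧ ∀ i < m, τ (σ j i) = ρ i := by
    intro j
    have hmn : m ≤ n := by nlinarith [j.pos]
    obtain ⟨ρ, hρ, hρn⟩ := (τ.injective.comp (σ j).injective).injOn.exists_perm_extend
      (s := {i | i < m}) (t := Finset.range n)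
      (fun i (hi : i < m) => Finset.mem_range.2 (hi.trans_le hmn))
      (fun i hi => hmaps (hS j i hi))
    exact ⟨ρ, fun i hi => hρn i (by simpa using hi), fun i hi => (hρ hi).symm⟩
  choose ρ hρn hρ using hρ
  refine ⟨τ, (S ∪ Finset.range n).finite_toSet.subset fun x hx => ?_, ρ, hρn, ?_, hρ⟩
  · by_contra hxS
    simp only [Finset.coe_union, Set.mem_union, Finset.mem_coe, not_or] at hxS
    exact hx (hsupp x hxS.1 hxS.2)
  · rintro k ⟨hk, hkn⟩
    simp only [Set.mem_iUnion, Set.mem_image, Set.mem_ofPred_eq] at hk hkn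
    obtain ⟨j, i, hi, rfl⟩ := hk
    exact hfix _ (hS j i hi) (Finset.mem_range.2 hkn)

/-- Given finitary permutations `σ_1, …, σ_h` of `ℕ`, `m ≥ 1` and
`n ≥ h·m + 1`, with `D = (⋃ⱼ σⱼ([m])) ∩ [n]`, there are `σ ∈ Sym` and
`τ_1, …, τ_h ∈ Sym(n)` with `σ` the identity on `D` and `σ ∘ σⱼ = τⱼ` on `[m]`. -/
theorem pull_permutation (h m n : ℕ) (hm : 1 ≤ m) (hn : h * m + 1 ≤ n)
    (σ : Fin h → Equiv.Perm ℕ) (hσ : ∀ j, IsFinPerm (σ j)) :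
    ∃ τ : Equiv.Perm ℕ, IsFinPerm τ ∧
      ∃ ρ : Fin h → Equiv.Perm ℕ, (∀ j, InSymN n (ρ j)) ∧
        (∀ k, k ∈ (⋃ j, (σ j) '' {i | i < m}) ∩ {k | k < n} → τ k = k) ∧
        (∀ j, ∀ i < m, τ ((σ j) i) = (ρ j) i) :=
  pull_permutation_general h m n hn σ
end
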